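/- arXiv:math/0505252 — 2 statements merged into one kernel-verified Lean document; each statement's English description precedes it below -/
import Mathlib

section
/- The following 3×3 matrices over F satisfy the B₂ affine Hecke relations with p = q² and give an irreducible representation (every invariant F-subspace of F³ is 0 or F³): X₁ = diag(1, q², q²); X₂ with rows [q², 0, 0], [0, 1, (q⁴−1)/q²], [0, 0, 1]; T₁ with rows [−q⁻¹, 0, −(q²+1)²/q²], [1, q, (q²+1)/q], [0, 0, q]; T₂ with rows [q², 0, 0], [0, 0, 1], [0, 1, (q⁴−1)/q²]. (This is the 3-dimensional non-calibrated composition factor U_b¹ of Ind_{Ĥ₁}^{Ĥ} ρ₁ᵇ in the case p = q².) -/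
set_option maxHeartbeats 2000000
set_option synthInstance.maxHeartbeats 400000

noncomputable section

/-- `F = ℂ(q)`, the field of rational functions in one indeterminate over `ℂ`. -/
abbrev F : Type := RatFunc ℂ

/-- The indeterminate `q ∈ F`. -/
def qF : F := RatFunc.X

/-- The imaginary unit `i`, viewed as a constant in `F`. -/
def ii : F := RatFunc.C Complex.I

/-- A quadruple of `n × n` matrices over `F` satisfies the `B₂` affine Hecke relations
(with parameters `p`, `q`). -/
def HeckeRelF {n : ℕ} (p q : F) (T₁ T₂ X₁ X₂ : Matrix (Fin n) (Fin n) F) : Prop :=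
  IsUnit X₁ ∧ IsUnit X₂ ∧
  (T₁ - q • 1) * (T₁ + q⁻¹ • 1) = 0 ∧
  (T₂ - p • 1) * (T₂ + p⁻¹ • 1) = 0 ∧
  T₁ * T₂ * T₁ * T₂ = T₂ * T₁ * T₂ * T₁ ∧
  T₁ * X₂ * T₁ = X₁ ∧
  T₂ * X₂⁻¹ * T₂ = X₂ ∧
  T₂ * X₁ = X₁ * T₂ ∧
  X₁ * X₂ = X₂ * X₁

/-- Irreducibility: the only `F`-subspaces of `Fⁿ` invariant under all four matrices
are `0` and `Fⁿ`. -/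
def IsIrredRepF {n : ℕ} (T₁ T₂ X₁ X₂ : Matrix (Fin n) (Fin n) F) : Prop :=
  ∀ U : Submodule F (Fin n → F),
    (∀ v ∈ U, T₁.mulVec v ∈ U) → (∀ v ∈ U, T₂.mulVec v ∈ U) →
    (∀ v ∈ U, X₁.mulVec v ∈ U) → (∀ v ∈ U, X₂.mulVec v ∈ U) →
    U = ⊥ ∨ U = ⊤

/-- `X₁` of `U_b¹` at `p = q²`. -/
def X1b1q2 : Matrix (Fin 3) (Fin 3) F := !![1, 0, 0; 0, qF ^ 2, 0; 0, 0, qF ^ 2]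

/-- `X₂` of `U_b¹` at `p = q²`. -/
def X2b1q2 : Matrix (Fin 3) (Fin 3) F :=
  !![qF ^ 2, 0, 0; 0, 1, (qF ^ 4 - 1) / qF ^ 2; 0, 0, 1]

/-- `T₁` of `U_b¹` at `p = q²`. -/
def T1b1q2 : Matrix (Fin 3) (Fin 3) F :=
  !![-qF⁻¹, 0, -(qF ^ 2 + 1) ^ 2 / qF ^ 2; 1, qF, (qF ^ 2 + 1) / qF; 0, 0, qF]

/-- `T₂` of `U_b¹` at `p = q²`. -/
def T2b1q2 : Matrix (Fin 3) (Fin 3) F :=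
  !![qF ^ 2, 0, 0; 0, 0, 1; 0, 1, (qF ^ 4 - 1) / qF ^ 2]

lemma qF_ne_zero : qF ≠ 0 := RatFunc.X_ne_zero

lemma qF_sq_sub_one_ne_zero : qF ^ 2 - 1 ≠ 0 := by
  have h1 : (Polynomial.X ^ 2 - 1 : Polynomial ℂ) ≠ 0 := by
    intro h
    have := congrArg (Polynomial.eval 0) h
    simp at this
  intro h
  apply h1
  apply RatFunc.algebraMap_injective ℂ
  rw [map_sub, map_pow, map_one, RatFunc.algebraMap_X]
  simpa [qF] using h

lemma qF_sq_add_one_ne_zero : qF ^ 2 + 1 ≠ 0 := by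
  have h1 : (Polynomial.X ^ 2 + 1 : Polynomial ℂ) ≠ 0 := by
    intro h
    have := congrArg (Polynomial.eval 0) h
    simp at this
  intro h
  apply h1
  apply RatFunc.algebraMap_injective ℂ
  rw [map_add, map_pow, map_one, RatFunc.algebraMap_X]
  simpa [qF] using h

lemma X2b1q2_inv :
    X2b1q2⁻¹ = !![(qF ^ 2)⁻¹, 0, 0; 0, 1, -((qF ^ 4 - 1) / qF ^ 2); 0, 0, 1] := by
  have hq := qF_ne_zero
  apply Matrix.inv_eq_right_inv
  ext i j
  fin_cases i <;> fin_cases j <;>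
    (simp [X2b1q2, Matrix.mul_apply, Fin.sum_univ_three, Matrix.vecHead, Matrix.vecTail,
      Matrix.one_apply] <;> (try field_simp) <;> (try ring))

/-- `U_b¹` at `p = q²` satisfies the `B₂` affine Hecke relations and is irreducible. -/
theorem Ub1q2_relations_and_irreducible :
    HeckeRelF (qF ^ 2) qF T1b1q2 T2b1q2 X1b1q2 X2b1q2 ∧
    IsIrredRepF T1b1q2 T2b1q2 X1b1q2 X2b1q2 := by
  have hq := qF_ne_zero
  have hq2 := qF_sq_sub_one_ne_zero
  have hq3 := qF_sq_add_one_ne_zero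
  constructor
  · refine ⟨?_, ?_, ?_, ?_, ?_, ?_, ?_, ?_, ?_⟩
    · rw [Matrix.isUnit_iff_isUnit_det, isUnit_iff_ne_zero]
      have hd : X1b1q2.det = qF ^ 4 := by
        simp [X1b1q2, Matrix.det_fin_three, Matrix.vecHead, Matrix.vecTail]
        ring
      rw [hd]
      exact pow_ne_zero 4 hq
    · rw [Matrix.isUnit_iff_isUnit_det, isUnit_iff_ne_zero]
      have hd : X2b1q2.det = qF ^ 2 := by
        simp [X2b1q2, Matrix.det_fin_three, Matrix.vecHead, Matrix.vecTail]
      rw [hd]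
      exact pow_ne_zero 2 hq
    · ext i j
      fin_cases i <;> fin_cases j <;>
        (simp [T1b1q2, Matrix.mul_apply, Fin.sum_univ_three, Matrix.vecHead, Matrix.vecTail,
          Matrix.one_apply] <;> (try field_simp) <;> (try ring))
    · ext i j
      fin_cases i <;> fin_cases j <;>
        (simp [T2b1q2, Matrix.mul_apply, Fin.sum_univ_three, Matrix.vecHead, Matrix.vecTail,
          Matrix.one_apply] <;> (try field_simp) <;> (try ring))
    · ext i j
      fin_cases i <;> fin_cases j <;>
        (simp [T1b1q2, T2b1q2, Matrix.mul_apply, Fin.sum_univ_three, Matrix.vecHead,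
          Matrix.vecTail] <;> (try field_simp) <;> (try ring) <;> (try field_simp) <;>
          (try ring))
    · ext i j
      fin_cases i <;> fin_cases j <;>
        (simp [T1b1q2, X2b1q2, X1b1q2, Matrix.mul_apply, Fin.sum_univ_three, Matrix.vecHead,
          Matrix.vecTail] <;> (try field_simp) <;> (try ring))
    · rw [X2b1q2_inv]
      ext i j
      fin_cases i <;> fin_cases j <;>
        (simp [T2b1q2, X2b1q2, Matrix.mul_apply, Fin.sum_univ_three, Matrix.vecHead,
          Matrix.vecTail] <;> (try field_simp) <;> (try ring))
    · ext i j
      fin_cases i <;> fin_cases j <;>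
        (simp [T2b1q2, X1b1q2, Matrix.mul_apply, Fin.sum_univ_three, Matrix.vecHead,
          Matrix.vecTail] <;> (try field_simp) <;> (try ring))
    · ext i j
      fin_cases i <;> fin_cases j <;>
        (simp [X1b1q2, X2b1q2, Matrix.mul_apply, Fin.sum_univ_three, Matrix.vecHead,
          Matrix.vecTail] <;> (try field_simp) <;> (try ring))
  · intro U hT1 hT2 hX1 hX2
    by_cases hU : U = ⊥
    · exact Or.inl hU
    right
    obtain ⟨v, hv, hvne⟩ := Submodule.ne_bot_iff U |>.1 hU
    set e0 : Fin 3 → F := ![1, 0, 0] with he0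
    set e1 : Fin 3 → F := ![0, 1, 0] with he1
    set e2 : Fin 3 → F := ![0, 0, 1] with he2
    -- Step A: projections
    have hA : ∀ w ∈ U, (![0, w 1, w 2] : Fin 3 → F) ∈ U := by
      intro w hw
      have h1 : (qF ^ 2 - 1)⁻¹ • (X1b1q2.mulVec w - w) ∈ U :=
        U.smul_mem _ (U.sub_mem (hX1 w hw) hw)
      convert h1 using 1
      funext j
      fin_cases j <;>
        (simp [X1b1q2, Matrix.mulVec, dotProduct, Fin.sum_univ_three, Matrix.vecHead,
          Matrix.vecTail] <;> (try field_simp) <;> (try ring))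
    -- Step C : e1 ∈ U → e2 ∈ U
    have hC : e1 ∈ U → e2 ∈ U := by
      intro h1
      have h2 : T2b1q2.mulVec e1 ∈ U := hT2 e1 h1
      convert h2 using 1
      funext j
      fin_cases j <;>
        simp [T2b1q2, he1, he2, Matrix.mulVec, dotProduct, Fin.sum_univ_three,
          Matrix.vecHead, Matrix.vecTail]
    -- Step D : e1, e2 ∈ U → e0 ∈ U
    have hD : e1 ∈ U → e2 ∈ U → e0 ∈ U := by
      intro h1 h2
      have h3 : (-(qF ^ 2 + 1) ^ 2 / qF ^ 2)⁻¹ •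
          (T1b1q2.mulVec e2 - ((qF ^ 2 + 1) / qF) • e1 - qF • e2) ∈ U :=
        U.smul_mem _ (U.sub_mem (U.sub_mem (hT1 e2 h2) (U.smul_mem _ h1)) (U.smul_mem _ h2))
      convert h3 using 1
      funext j
      fin_cases j <;>
        (simp [T1b1q2, he0, he1, he2, Matrix.mulVec, dotProduct, Fin.sum_univ_three,
          Matrix.vecHead, Matrix.vecTail] <;> (try field_simp) <;> (try ring))
    -- Step E : e0 ∈ U → e1 ∈ U
    have hE : e0 ∈ U → e1 ∈ U := by
      intro h0
      have h3 : T1b1q2.mulVec e0 + qF⁻¹ • e0 ∈ U :=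
        U.add_mem (hT1 e0 h0) (U.smul_mem _ h0)
      convert h3 using 1
      funext j
      fin_cases j <;>
        (simp [T1b1q2, he0, he1, Matrix.mulVec, dotProduct, Fin.sum_univ_three,
          Matrix.vecHead, Matrix.vecTail] <;> (try field_simp) <;> (try ring))
    -- Step B : vector of form ![0,a,b] with b ≠ 0 in U gives e1 ∈ U
    have hB : ∀ a b : F, b ≠ 0 → (![0, a, b] : Fin 3 → F) ∈ U → e1 ∈ U := by
      intro a b hb hw
      have hc : (qF ^ 4 - 1) / qF ^ 2 * b ≠ 0 := by
        apply mul_ne_zero _ hb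
        apply div_ne_zero _ (pow_ne_zero 2 hq)
        have : qF ^ 4 - 1 = (qF ^ 2 - 1) * (qF ^ 2 + 1) := by ring
        rw [this]
        exact mul_ne_zero hq2 hq3
      have hd : -(qF ^ 2 * b) + qF ^ 6 * b ≠ 0 := by
        have : -(qF ^ 2 * b) + qF ^ 6 * b = (qF ^ 2 - 1) * ((qF ^ 2 + 1) * (qF ^ 2 * b)) := by
          ring
        rw [this]
        exact mul_ne_zero hq2 (mul_ne_zero hq3 (mul_ne_zero (pow_ne_zero 2 hq) hb))
      have hq4 : -1 + qF ^ 4 ≠ 0 := by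
        have : -1 + qF ^ 4 = (qF ^ 2 - 1) * (qF ^ 2 + 1) := by ring
        rw [this]
        exact mul_ne_zero hq2 hq3
      have h1 : ((qF ^ 4 - 1) / qF ^ 2 * b)⁻¹ •
          (X2b1q2.mulVec ![0, a, b] - ![0, a, b]) ∈ U :=
        U.smul_mem _ (U.sub_mem (hX2 _ hw) hw)
      convert h1 using 1
      funext j
      fin_cases j <;>
        (simp [X2b1q2, he1, Matrix.mulVec, dotProduct, Fin.sum_univ_three,
          Matrix.vecHead, Matrix.vecTail] <;> (try field_simp) <;> (try ring) <;>
          (try field_simp) <;> (try ring))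
    -- main case analysis : all of e0, e1, e2 are in U
    have hw : (![0, v 1, v 2] : Fin 3 → F) ∈ U := hA v hv
    have key : e0 ∈ U ∧ e1 ∈ U ∧ e2 ∈ U := by
      by_cases hv2 : v 2 ≠ 0
      · have h1 : e1 ∈ U := hB (v 1) (v 2) hv2 hw
        have h2 : e2 ∈ U := hC h1
        exact ⟨hD h1 h2, h1, h2⟩
      push_neg at hv2
      by_cases hv1 : v 1 ≠ 0
      · have h1 : e1 ∈ U := by
          have h3 : (v 1)⁻¹ • (![0, v 1, v 2] : Fin 3 → F) ∈ U := U.smul_mem _ hw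
          convert h3 using 1
          funext j
          fin_cases j <;> simp [he1, hv2, inv_mul_cancel₀ hv1]
        have h2 : e2 ∈ U := hC h1
        exact ⟨hD h1 h2, h1, h2⟩
      push_neg at hv1
      have hv0 : v 0 ≠ 0 := by
        intro hv0
        apply hvne
        funext j
        fin_cases j <;> simp [hv0, hv1, hv2]
      have h0 : e0 ∈ U := by
        have h4 : v - ![0, v 1, v 2] = v 0 • e0 := by
          funext j
          fin_cases j <;>
            simp [he0, Matrix.vecHead, Matrix.vecTail]
        have h3 : (v 0)⁻¹ • (v - ![0, v 1, v 2]) ∈ U := U.smul_mem _ (U.sub_mem hv hw)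
        rw [h4, smul_smul, inv_mul_cancel₀ hv0, one_smul] at h3
        exact h3
      have h1 : e1 ∈ U := hE h0
      exact ⟨h0, h1, hC h1⟩
    obtain ⟨h0, h1, h2⟩ := key
    rw [Submodule.eq_top_iff']
    intro x
    have hx : x = x 0 • e0 + x 1 • e1 + x 2 • e2 := by
      funext j
      fin_cases j <;> simp [he0, he1, he2]
    rw [hx]
    exact U.add_mem (U.add_mem (U.smul_mem _ h0) (U.smul_mem _ h1)) (U.smul_mem _ h2)
end
end

section
/- The following 2×2 matrices over K satisfy the B₂ affine Hecke relations and give an irreducible representation (every invariant K-subspace of K² is 0 or K²): X₁ = diag(p, −p), X₂ = diag(−p, p), T₁ with rows [(q²−1)/(2q), (1+q²)²/(4q²)], [1, (q²−1)/(2q)], T₂ = diag(p, p). (This is the 2-dimensional calibrated composition factor U_c¹ of Ind_{Ĥ₂}^{Ĥ} ρ₁ᶜ.) -/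
set_option maxHeartbeats 2000000
set_option synthInstance.maxHeartbeats 400000

noncomputable section

/-- `K = ℂ(p,q)`, the field of rational functions in two indeterminates over `ℂ`. -/
abbrev K : Type := FractionRing (MvPolynomial (Fin 2) ℂ)

/-- The indeterminate `p ∈ K`. -/
def pp : K := algebraMap (MvPolynomial (Fin 2) ℂ) K (MvPolynomial.X 0)

/-- The indeterminate `q ∈ K`. -/
def qq : K := algebraMap (MvPolynomial (Fin 2) ℂ) K (MvPolynomial.X 1)

/-- A quadruple of `n × n` matrices over `K` satisfies the `B₂` affine Hecke relations
(with parameters `p`, `q`). -/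
def HeckeRel {n : ℕ} (p q : K) (T₁ T₂ X₁ X₂ : Matrix (Fin n) (Fin n) K) : Prop :=
  IsUnit X₁ ∧ IsUnit X₂ ∧
  (T₁ - q • 1) * (T₁ + q⁻¹ • 1) = 0 ∧
  (T₂ - p • 1) * (T₂ + p⁻¹ • 1) = 0 ∧
  T₁ * T₂ * T₁ * T₂ = T₂ * T₁ * T₂ * T₁ ∧
  T₁ * X₂ * T₁ = X₁ ∧
  T₂ * X₂⁻¹ * T₂ = X₂ ∧
  T₂ * X₁ = X₁ * T₂ ∧
  X₁ * X₂ = X₂ * X₁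

/-- Irreducibility: the only `K`-subspaces of `Kⁿ` invariant under all four matrices
are `0` and `Kⁿ`. -/
def IsIrredRep {n : ℕ} (T₁ T₂ X₁ X₂ : Matrix (Fin n) (Fin n) K) : Prop :=
  ∀ U : Submodule K (Fin n → K),
    (∀ v ∈ U, T₁.mulVec v ∈ U) → (∀ v ∈ U, T₂.mulVec v ∈ U) →
    (∀ v ∈ U, X₁.mulVec v ∈ U) → (∀ v ∈ U, X₂.mulVec v ∈ U) →
    U = ⊥ ∨ U = ⊤

/-- `X₁` of `U_c¹`. -/
def X1c : Matrix (Fin 2) (Fin 2) K := !![pp, 0; 0, -pp]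

/-- `X₂` of `U_c¹`. -/
def X2c : Matrix (Fin 2) (Fin 2) K := !![-pp, 0; 0, pp]

/-- `T₁` of `U_c¹`. -/
def T1c : Matrix (Fin 2) (Fin 2) K :=
  !![(qq ^ 2 - 1) / (2 * qq), (1 + qq ^ 2) ^ 2 / (4 * qq ^ 2); 1, (qq ^ 2 - 1) / (2 * qq)]

/-- `T₂` of `U_c¹`. -/
def T2c : Matrix (Fin 2) (Fin 2) K := !![pp, 0; 0, pp]

/-! ### Auxiliary lemmas -/

lemma pp_ne : pp ≠ 0 := by
  rw [pp, Ne, IsFractionRing.to_map_eq_zero_iff]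
  exact MvPolynomial.X_ne_zero 0

lemma qq_ne : qq ≠ 0 := by
  rw [qq, Ne, IsFractionRing.to_map_eq_zero_iff]
  exact MvPolynomial.X_ne_zero 1

lemma one_add_qq_sq_ne : 1 + qq ^ 2 ≠ 0 := by
  have h : (1 : K) + qq ^ 2
      = algebraMap (MvPolynomial (Fin 2) ℂ) K (1 + MvPolynomial.X 1 ^ 2) := by
    simp only [map_add, map_pow, map_one, qq]
  rw [h, Ne, IsFractionRing.to_map_eq_zero_iff]
  intro h2
  have := congrArg (MvPolynomial.eval fun _ => (0 : ℂ)) h2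
  simp at this

/-! ### Generic matrix identities over a field -/

section Generic

variable {F : Type} [Field F]

lemma gen_rel1 (q : F) (hq : q ≠ 0) (h2 : (2 : F) ≠ 0) :
    ((!![(q ^ 2 - 1) / (2 * q), (1 + q ^ 2) ^ 2 / (4 * q ^ 2); 1, (q ^ 2 - 1) / (2 * q)]
        : Matrix (Fin 2) (Fin 2) F) - q • 1) *
      (!![(q ^ 2 - 1) / (2 * q), (1 + q ^ 2) ^ 2 / (4 * q ^ 2); 1, (q ^ 2 - 1) / (2 * q)]
        + q⁻¹ • 1) = 0 := by
  have h4 : (4 : F) ≠ 0 := by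
    rw [show (4 : F) = 2 * 2 by norm_num]; exact mul_ne_zero h2 h2
  ext i j
  fin_cases i <;> fin_cases j <;>
    simp [Matrix.mul_apply, Fin.sum_univ_two, Matrix.one_apply] <;>
    field_simp [h2, h4] <;> ring

lemma gen_rel2 (p : F) (hp : p ≠ 0) :
    ((!![p, 0; 0, p] : Matrix (Fin 2) (Fin 2) F) - p • 1) *
      (!![p, 0; 0, p] + p⁻¹ • 1) = 0 := by
  ext i j
  fin_cases i <;> fin_cases j <;>
    simp [Matrix.mul_apply, Fin.sum_univ_two, Matrix.one_apply]

lemma gen_rel4 (p q : F) (hq : q ≠ 0) (h2 : (2 : F) ≠ 0) :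
    (!![(q ^ 2 - 1) / (2 * q), (1 + q ^ 2) ^ 2 / (4 * q ^ 2); 1, (q ^ 2 - 1) / (2 * q)]
        : Matrix (Fin 2) (Fin 2) F) * !![-p, 0; 0, p] *
      !![(q ^ 2 - 1) / (2 * q), (1 + q ^ 2) ^ 2 / (4 * q ^ 2); 1, (q ^ 2 - 1) / (2 * q)]
    = !![p, 0; 0, -p] := by
  have h4 : (4 : F) ≠ 0 := by
    rw [show (4 : F) = 2 * 2 by norm_num]; exact mul_ne_zero h2 h2
  ext i j
  fin_cases i <;> fin_cases j <;>
    simp [Matrix.mul_apply, Fin.sum_univ_two] <;>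
    field_simp [h2, h4] <;> ring

lemma gen_inv (p : F) (hp : p ≠ 0) :
    (!![-p, 0; 0, p] : Matrix (Fin 2) (Fin 2) F)⁻¹ = !![-p⁻¹, 0; 0, p⁻¹] := by
  apply Matrix.inv_eq_right_inv
  ext i j
  fin_cases i <;> fin_cases j <;>
    simp [Matrix.mul_apply, Fin.sum_univ_two, Matrix.one_apply] <;>
    field_simp

lemma gen_rel5 (p : F) (hp : p ≠ 0) :
    (!![p, 0; 0, p] : Matrix (Fin 2) (Fin 2) F) * !![-p, 0; 0, p]⁻¹ * !![p, 0; 0, p]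
      = !![-p, 0; 0, p] := by
  rw [gen_inv p hp]
  ext i j
  fin_cases i <;> fin_cases j <;>
    simp [Matrix.mul_apply, Fin.sum_univ_two] <;>
    field_simp <;> ring

/-- Generic irreducibility: `X = diag(p, -p)` with `2p ≠ 0` and `T = !![a, b; c, d]` with
`b ≠ 0`, `c ≠ 0` admit no nontrivial common invariant subspace of `F²`. -/
lemma gen_irred (p a b c d : F) (h2p : 2 * p ≠ 0) (hb : b ≠ 0) (hc : c ≠ 0)
    (U : Submodule F (Fin 2 → F))
    (hT : ∀ v ∈ U, Matrix.mulVec !![a, b; c, d] v ∈ U)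
    (hX : ∀ v ∈ U, Matrix.mulVec !![p, 0; 0, -p] v ∈ U)
    (hU : U ≠ ⊥) : U = ⊤ := by
  obtain ⟨v, hvU, hv⟩ := Submodule.exists_mem_ne_zero_of_ne_bot hU
  have hp : p ≠ 0 := fun h => h2p (by rw [h, mul_zero])
  have h2 : (2 : F) ≠ 0 := fun h => h2p (by rw [h, zero_mul])
  -- the "first coordinate" projection of `v` lies in `U`
  have h0 : (![v 0, 0] : Fin 2 → F) ∈ U := by
    have hm := U.add_mem (U.smul_mem (2 * p)⁻¹ (hX v hvU)) (U.smul_mem (2 : F)⁻¹ hvU)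
    have he : (![v 0, 0] : Fin 2 → F)
        = (2 * p)⁻¹ • Matrix.mulVec !![p, 0; 0, -p] v + (2 : F)⁻¹ • v := by
      funext i
      fin_cases i <;>
        simp [Matrix.mulVec, dotProduct, Fin.sum_univ_two] <;>
        field_simp [h2, hp] <;> ring
    rw [he]; exact hm
  have h1 : (![0, v 1] : Fin 2 → F) ∈ U := by
    have he : (![0, v 1] : Fin 2 → F) = v - ![v 0, 0] := by
      funext i; fin_cases i <;> simp
    rw [he]; exact U.sub_mem hvU h0
  -- both standard basis vectors lie in `U`
  have key : (![1, 0] : Fin 2 → F) ∈ U ∧ (![0, 1] : Fin 2 → F) ∈ U := by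
    have step1 : (![1, 0] : Fin 2 → F) ∈ U → (![0, 1] : Fin 2 → F) ∈ U := by
      intro he0
      have hm := U.smul_mem c⁻¹
        (U.sub_mem (hT _ he0) (U.smul_mem a he0))
      have he : (![0, 1] : Fin 2 → F)
          = c⁻¹ • (Matrix.mulVec !![a, b; c, d] ![1, 0] - a • ![1, 0]) := by
        funext i
        fin_cases i <;>
          simp [Matrix.mulVec, dotProduct, Fin.sum_univ_two,
            Matrix.vecHead, Matrix.vecTail, inv_mul_cancel₀ hc]
      rw [he]; exact hm
    have step2 : (![0, 1] : Fin 2 → F) ∈ U → (![1, 0] : Fin 2 → F) ∈ U := by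
      intro he1
      have hm := U.smul_mem b⁻¹
        (U.sub_mem (hT _ he1) (U.smul_mem d he1))
      have he : (![1, 0] : Fin 2 → F)
          = b⁻¹ • (Matrix.mulVec !![a, b; c, d] ![0, 1] - d • ![0, 1]) := by
        funext i
        fin_cases i <;>
          simp [Matrix.mulVec, dotProduct, Fin.sum_univ_two,
            Matrix.vecHead, Matrix.vecTail, inv_mul_cancel₀ hb]
      rw [he]; exact hm
    rcases eq_or_ne (v 0) 0 with h | h
    · have hv1 : v 1 ≠ 0 := by
        intro h1'
        apply hv
        funext i; fin_cases i <;> simp [h, h1']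
      have he1 : (![0, 1] : Fin 2 → F) ∈ U := by
        have hm := U.smul_mem (v 1)⁻¹ h1
        have he : (![0, 1] : Fin 2 → F) = (v 1)⁻¹ • ![0, v 1] := by
          funext i; fin_cases i <;> simp [inv_mul_cancel₀ hv1]
        rw [he]; exact hm
      exact ⟨step2 he1, he1⟩
    · have he0 : (![1, 0] : Fin 2 → F) ∈ U := by
        have hm := U.smul_mem (v 0)⁻¹ h0
        have he : (![1, 0] : Fin 2 → F) = (v 0)⁻¹ • ![v 0, 0] := by
          funext i; fin_cases i <;> simp [inv_mul_cancel₀ h]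
        rw [he]; exact hm
      exact ⟨he0, step1 he0⟩
  -- conclude
  rw [Submodule.eq_top_iff']
  intro w
  have he : w = w 0 • ![1, 0] + w 1 • ![0, 1] := by
    funext i; fin_cases i <;> simp
  rw [he]
  exact U.add_mem (U.smul_mem _ key.1) (U.smul_mem _ key.2)

end Generic

/-! ### The specific relations -/

lemma unit1 : IsUnit X1c := by
  rw [Matrix.isUnit_iff_isUnit_det, isUnit_iff_ne_zero]
  have h : X1c.det = -(pp * pp) := by rw [X1c, Matrix.det_fin_two_of]; ring
  rw [h]
  simpa using mul_ne_zero pp_ne pp_ne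

lemma unit2 : IsUnit X2c := by
  rw [Matrix.isUnit_iff_isUnit_det, isUnit_iff_ne_zero]
  have h : X2c.det = -(pp * pp) := by rw [X2c, Matrix.det_fin_two_of]; ring
  rw [h]
  simpa using mul_ne_zero pp_ne pp_ne

lemma rel3 : T1c * T2c * T1c * T2c = T2c * T1c * T2c * T1c := by
  ext i j
  fin_cases i <;> fin_cases j <;>
    simp [T1c, T2c, Matrix.mul_apply, Fin.sum_univ_two] <;> ring

lemma rel6 : T2c * X1c = X1c * T2c := by
  ext i j
  fin_cases i <;> fin_cases j <;>
    simp [T2c, X1c, Matrix.mul_apply, Fin.sum_univ_two] <;> ring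

lemma rel7 : X1c * X2c = X2c * X1c := by
  ext i j
  fin_cases i <;> fin_cases j <;>
    simp [X1c, X2c, Matrix.mul_apply, Fin.sum_univ_two] <;> ring

/-- `U_c¹` satisfies the `B₂` affine Hecke relations and is irreducible. -/
theorem Uc1_relations_and_irreducible :
    HeckeRel pp qq T1c T2c X1c X2c ∧ IsIrredRep T1c T2c X1c X2c := by
  constructor
  · refine ⟨unit1, unit2, ?_, ?_, rel3, ?_, ?_, rel6, rel7⟩
    · rw [T1c]; exact gen_rel1 qq qq_ne two_ne_zero
    · rw [T2c]; exact gen_rel2 pp pp_ne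
    · rw [T1c, X2c, X1c]; exact gen_rel4 pp qq qq_ne two_ne_zero
    · rw [T2c, X2c]; exact gen_rel5 pp pp_ne
  · intro U hT1 _hT2 hX1 _hX2
    by_cases hU : U = ⊥
    · exact Or.inl hU
    · refine Or.inr ?_
      have hb : (1 + qq ^ 2) ^ 2 / (4 * qq ^ 2) ≠ 0 := by
        apply div_ne_zero (pow_ne_zero _ one_add_qq_sq_ne)
        exact mul_ne_zero (by norm_num) (pow_ne_zero _ qq_ne)
      exact gen_irred pp ((qq ^ 2 - 1) / (2 * qq)) ((1 + qq ^ 2) ^ 2 / (4 * qq ^ 2)) 1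
        ((qq ^ 2 - 1) / (2 * qq)) (mul_ne_zero two_ne_zero pp_ne) hb one_ne_zero U
        (fun v hv => by have := hT1 v hv; rwa [T1c] at this)
        (fun v hv => by have := hX1 v hv; rwa [X1c] at this) hU
end
end
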